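/- arXiv:0908.2251 — 2 statements merged into one kernel-verified Lean document; each statement's English description precedes it below -/
import Mathlib

section
/- Let K = ℚ(√−1) with conjugation z ↦ z̄, and let σ: K² → K² be the ℚ-linear map σ(z₁, z₂) = (z̄₂, −z̄₁). Then no K-line of K² is stable under σ: there is no pair (z₁, z₂) ∈ K² with (z₁, z₂) ≠ (0,0) and no λ ∈ K such that z̄₂ = λ·z₁ and −z̄₁ = λ·z₂. Equivalently, the induced map on the projective line ℙ¹(K), (z₁ : z₂) ↦ (z̄₂ : −z̄₁), has no fixed point. -/
/-- **Claim 3.1 of the paper.** Let `K = ℚ(√-1)` with conjugation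
`conj` (the ℚ-algebra automorphism with `conj i = -i`), and let
`σ (z₁, z₂) = (conj z₂, -conj z₁)`.  Then no `K`-line of `K²` is stable under `σ`:
there is no `(z₁, z₂) ≠ (0, 0)` and no `λ ∈ K` with `conj z₂ = λ * z₁` and
`-conj z₁ = λ * z₂`.  Equivalently, the induced map `(z₁ : z₂) ↦ (conj z₂ : -conj z₁)`
on `ℙ¹(K)` has no fixed point. -/
theorem gaussian_sigma_no_fixed_line
    {K : Type*} [Field K] [Algebra ℚ K] (i : K) (hi : i ^ 2 = -1)
    (hdeg : Module.finrank ℚ K = 2)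
    (conj : K ≃ₐ[ℚ] K) (hconj : conj i = -i) :
    ¬ ∃ (z₁ z₂ l : K), (z₁ ≠ 0 ∨ z₂ ≠ 0) ∧
        conj z₂ = l * z₁ ∧ -(conj z₁) = l * z₂ := by
  rintro ⟨z₁, z₂, l, hz, h1, h2⟩
  have hinj : Function.Injective (algebraMap ℚ K) := (algebraMap ℚ K).injective
  -- 1, i are linearly independent over ℚ
  have hli : LinearIndependent ℚ ![(1 : K), i] := by
    rw [LinearIndependent.pair_iff]
    intro s t hst
    have hst' : algebraMap ℚ K s + algebraMap ℚ K t * i = 0 := by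
      simpa [Algebra.smul_def] using hst
    have h0 : algebraMap ℚ K (s ^ 2 + t ^ 2) = algebraMap ℚ K 0 := by
      rw [map_add, map_pow, map_pow, map_zero]
      linear_combination (algebraMap ℚ K s - algebraMap ℚ K t * i) * hst'
        + (algebraMap ℚ K t) ^ 2 * hi
    have h0' : s ^ 2 + t ^ 2 = 0 := hinj h0
    have hs2 : s ^ 2 = 0 := by nlinarith [sq_nonneg s, sq_nonneg t]
    have ht2 : t ^ 2 = 0 := by nlinarith [sq_nonneg s, sq_nonneg t]
    exact ⟨by simpa using pow_eq_zero_iff (n := 2) (by norm_num) |>.mp hs2,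
      by simpa using pow_eq_zero_iff (n := 2) (by norm_num) |>.mp ht2⟩
  -- basis
  have hcard : Fintype.card (Fin 2) = Module.finrank ℚ K := by simp [hdeg]
  let b : Module.Basis (Fin 2) ℚ K := basisOfLinearIndependentOfCardEqFinrank hli hcard
  have hb : ⇑b = ![(1 : K), i] := coe_basisOfLinearIndependentOfCardEqFinrank hli hcard
  have hrepr : ∀ x : K,
      x = algebraMap ℚ K (b.repr x 0) + algebraMap ℚ K (b.repr x 1) * i := by
    intro x
    have := b.sum_repr x
    rw [Fin.sum_univ_two] at this
    conv_lhs => rw [← this]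
    rw [hb]
    simp [Algebra.smul_def]
  have hconjx : ∀ x : K,
      conj x = algebraMap ℚ K (b.repr x 0) - algebraMap ℚ K (b.repr x 1) * i := by
    intro x
    conv_lhs => rw [hrepr x]
    rw [map_add, map_mul, AlgEquiv.commutes, AlgEquiv.commutes, hconj]
    ring
  have hinv : ∀ x : K, conj (conj x) = x := by
    intro x
    rw [hconjx x, map_sub, map_mul, AlgEquiv.commutes, AlgEquiv.commutes, hconj]
    conv_rhs => rw [hrepr x]
    ring
  -- key : conj l * l = -1
  have c1 : z₂ = conj l * conj z₁ := by
    have := congrArg conj h1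
    rw [hinv, map_mul] at this
    exact this
  have key : conj l * l = -1 := by
    rcases hz with hz | hz
    · have c2 : -z₁ = conj l * conj z₂ := by
        have := congrArg conj h2
        rw [map_neg, hinv, map_mul] at this
        exact this
      have h3 : -z₁ = conj l * (l * z₁) := by rw [c2, h1]
      have h4 : (conj l * l + 1) * z₁ = 0 := by linear_combination -h3
      rcases mul_eq_zero.mp h4 with h | h
      · linear_combination h
      · exact absurd h hz
    · have hcz : conj z₁ = -(l * z₂) := by linear_combination -h2
      rw [hcz] at c1
      have h4 : (conj l * l + 1) * z₂ = 0 := by linear_combination c1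
      rcases mul_eq_zero.mp h4 with h | h
      · linear_combination h
      · exact absurd h hz
  -- conclude: a² + c² = -1 impossible
  set a : ℚ := b.repr l 0
  set c : ℚ := b.repr l 1
  have hsum : algebraMap ℚ K (a ^ 2 + c ^ 2) = algebraMap ℚ K (-1) := by
    rw [map_add, map_pow, map_pow, map_neg, map_one]
    have hl := hrepr l
    have hcl := hconjx l
    linear_combination key - (algebraMap ℚ K a - algebraMap ℚ K c * i) * hl
      - l * hcl + (algebraMap ℚ K c) ^ 2 * hi
  have : a ^ 2 + c ^ 2 = -1 := hinj hsum
  nlinarith [sq_nonneg a, sq_nonneg c]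
end

section
/- Let k be a field and a, b ∈ k be such that F(T) = T² − a·T − b is irreducible over k (in particular b ≠ 0). Let R = k[X, Y]/(Y² − a·X·Y − b·X²) and let A = R[1/X] be the localization of R at the image of X. Then: (a) the k-algebra substitution X ↦ Y, Y ↦ b·X + a·Y maps the polynomial Y² − a·X·Y − b·X² to −b·(Y² − a·X·Y − b·X²), hence preserves the ideal (Y² − a·X·Y − b·X²); (b) the image of Y is invertible in A (indeed Y·(Y − a·X) = b·X² in R); hence the substitution induces a k-algebra endomorphism σ of A; (c) the element t = Y·X⁻¹ ∈ A satisfies t² = a·t + b; and (d) σ(t) = t, i.e. σ fixes t and therefore fixes the image of the k-algebra map k[T]/(F) → A, T ↦ Y·X⁻¹, pointwise. -/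
set_option maxHeartbeats 1000000
set_option synthInstance.maxHeartbeats 400000

open MvPolynomial

noncomputable section

/-- The polynomial `Y² - a·X·Y - b·X²` (with `X = X 0`, `Y = X 1`) cutting out the
eigenline curve `D` of Section 4 of the paper. -/
def eigenPoly (k : Type*) [Field k] (a b : k) : MvPolynomial (Fin 2) k :=
  X 1 ^ 2 - C a * X 0 * X 1 - C b * X 0 ^ 2

/-- The substitution `X ↦ Y`, `Y ↦ b·X + a·Y` (the companion matrix of
`F(T) = T² - a·T - b` acting on coordinates). -/
def eigenSubst (k : Type*) [Field k] (a b : k) :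
    MvPolynomial (Fin 2) k →ₐ[k] MvPolynomial (Fin 2) k :=
  aeval ![X 1, C b * X 0 + C a * X 1]

/-- The affine ring `R = k[X, Y]/(Y² - a·X·Y - b·X²)` of the curve `D`. -/
abbrev EigenRing (k : Type*) [Field k] (a b : k) :=
  MvPolynomial (Fin 2) k ⧸ Ideal.span {eigenPoly k a b}

/-- The image of `X` in `R`. -/
def eigenX (k : Type*) [Field k] (a b : k) : EigenRing k a b :=
  Ideal.Quotient.mk _ (X 0)

/-- The image of `Y` in `R`. -/
def eigenY (k : Type*) [Field k] (a b : k) : EigenRing k a b :=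
  Ideal.Quotient.mk _ (X 1)

/-- The ring `A = R[1/X]`, the affine ring of the punctured curve `D^×`. -/
abbrev EigenAway (k : Type*) [Field k] (a b : k) :=
  Localization.Away (eigenX k a b)

/-- The element `t = Y·X⁻¹ ∈ A`. -/
def eigenT (k : Type*) [Field k] (a b : k) : EigenAway k a b :=
  algebraMap (EigenRing k a b) (EigenAway k a b) (eigenY k a b) *
    IsLocalization.Away.invSelf (eigenX k a b)

lemma eigenSubst_apply_poly {k : Type*} [Field k] (a b : k) :
    eigenSubst k a b (eigenPoly k a b) = - C b * eigenPoly k a b := by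
  simp only [eigenSubst, eigenPoly, map_sub, map_mul, map_pow, aeval_X, aeval_C,
    Matrix.cons_val_zero, Matrix.cons_val_one, Matrix.head_cons, algebraMap_eq]
  ring

lemma eigen_key {k : Type*} [Field k] (a b : k) :
    (Ideal.Quotient.mk (Ideal.span {eigenPoly k a b}) (eigenPoly k a b)) = 0 :=
  Ideal.Quotient.eq_zero_iff_mem.mpr (Ideal.subset_span rfl)

def eigenPsi (k : Type*) [Field k] (a b : k) : MvPolynomial (Fin 2) k →ₐ[k] EigenAway k a b :=
  ((IsScalarTower.toAlgHom k (EigenRing k a b) (EigenAway k a b)).comp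
    (Ideal.Quotient.mkₐ k _)).comp (eigenSubst k a b)

lemma eigenPsi_vanish {k : Type*} [Field k] (a b : k) :
    ∀ p ∈ Ideal.span {eigenPoly k a b}, eigenPsi k a b p = 0 := by
  intro p hp
  obtain ⟨q, rfl⟩ := Ideal.mem_span_singleton.mp hp
  have h : eigenPsi k a b (eigenPoly k a b) = 0 := by
    show algebraMap (EigenRing k a b) (EigenAway k a b)
      (Ideal.Quotient.mk _ (eigenSubst k a b (eigenPoly k a b))) = 0
    rw [eigenSubst_apply_poly, map_mul, eigen_key, mul_zero, map_zero]
  rw [map_mul]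
  exact mul_eq_zero_of_left h _

def eigenPhi (k : Type*) [Field k] (a b : k) : EigenRing k a b →ₐ[k] EigenAway k a b :=
  Ideal.Quotient.liftₐ _ (eigenPsi k a b) (eigenPsi_vanish a b)

lemma eigenPhi_X {k : Type*} [Field k] (a b : k) :
    eigenPhi k a b (eigenX k a b) =
      algebraMap (EigenRing k a b) (EigenAway k a b) (eigenY k a b) := by
  show eigenPsi k a b (X 0) = _
  simp [eigenPsi, eigenSubst, eigenY]

lemma eigenPhi_Y {k : Type*} [Field k] (a b : k) :
    eigenPhi k a b (eigenY k a b) =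
      algebraMap (EigenRing k a b) (EigenAway k a b)
        (algebraMap k (EigenRing k a b) b * eigenX k a b +
          algebraMap k (EigenRing k a b) a * eigenY k a b) := by
  show eigenPsi k a b (X 1) = _
  simp only [eigenPsi, eigenSubst, AlgHom.comp_apply, aeval_X, Matrix.cons_val_one,
    Matrix.head_cons, Matrix.cons_val_zero, map_add, map_mul]
  rfl

def eigenSigma (k : Type*) [Field k] (a b : k)
    (h : IsUnit ((eigenPhi k a b).toRingHom (eigenX k a b))) :
    EigenAway k a b →+* EigenAway k a b :=
  IsLocalization.Away.lift (S := EigenAway k a b) (g := (eigenPhi k a b).toRingHom)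
    (eigenX k a b) h

lemma eigenSigma_algebraMap {k : Type*} [Field k] (a b : k)
    (h : IsUnit ((eigenPhi k a b).toRingHom (eigenX k a b))) (r : EigenRing k a b) :
    eigenSigma k a b h (algebraMap (EigenRing k a b) (EigenAway k a b) r) =
      eigenPhi k a b r :=
  IsLocalization.Away.lift_eq (S := EigenAway k a b) (eigenX k a b) h r

lemma eigen_rel {k : Type*} [Field k] (a b : k) :
    eigenY k a b ^ 2 - algebraMap k (EigenRing k a b) a * eigenX k a b * eigenY k a b -
      algebraMap k (EigenRing k a b) b * eigenX k a b ^ 2 = 0 := by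
  have h := eigen_key a b
  simp only [eigenPoly, map_sub, map_mul, map_pow] at h
  convert h using 3 <;> rfl

lemma quad_aux {A : Type*} [CommRing A] (fx fy v ca cb : A) (hinv : fx * v = 1)
    (hrel : fy ^ 2 - ca * fx * fy - cb * fx ^ 2 = 0) :
    fy * v * (fy * v) = ca * (fy * v) + cb := by
  linear_combination v ^ 2 * hrel + (ca * fy * v + cb * (fx * v + 1)) * hinv

lemma sigT_aux {A : Type*} [CommRing A] (fx fy g w v : A) (hgx : g * fx = fy ^ 2)
    (hinv : fx * v = 1) (hw : fy * w = 1) :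
    g * w * (fy * fx) = fy * v * (fy * fx) := by
  linear_combination w * fy * hgx - fy ^ 2 * hinv + fy ^ 2 * hw

/-- **Claim 4.3 of the paper.** Let `k` be a field and `a, b ∈ k` with
`F(T) = T² - a·T - b` irreducible over `k`.  Let `R = k[X,Y]/(Y² - aXY - bX²)` and
`A = R[1/X]`.  Then:
(a) the substitution `X ↦ Y`, `Y ↦ bX + aY` sends `Y² - aXY - bX²` to
    `-b·(Y² - aXY - bX²)`, hence preserves the ideal it generates;
(b) the image of `Y` is invertible in `A` (indeed `Y·(Y - aX) = b·X²` in `R`);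
    hence the substitution induces a `k`-algebra endomorphism `σ` of `A`;
(c) `t = Y·X⁻¹ ∈ A` satisfies `t² = a·t + b`;
(d) `σ t = t`, so `σ` fixes the image of `k[T]/(F) → A`, `T ↦ Y·X⁻¹`
    (the `k`-subalgebra generated by `t`) pointwise. -/
theorem eigenline_substitution_fixes_quadratic_subfield
    {k : Type*} [Field k] (a b : k)
    (hF : Irreducible (Polynomial.X ^ 2 - Polynomial.C a * Polynomial.X -
      Polynomial.C b : Polynomial k)) :
    -- (a)
    (eigenSubst k a b (eigenPoly k a b) = - C b * eigenPoly k a b) ∧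
    (Ideal.map (eigenSubst k a b) (Ideal.span {eigenPoly k a b}) ≤
      Ideal.span {eigenPoly k a b}) ∧
    -- (b)
    (eigenY k a b * (eigenY k a b - algebraMap k (EigenRing k a b) a * eigenX k a b) =
      algebraMap k (EigenRing k a b) b * eigenX k a b ^ 2) ∧
    (IsUnit (algebraMap (EigenRing k a b) (EigenAway k a b) (eigenY k a b))) ∧
    -- (c)
    (eigenT k a b ^ 2 = algebraMap k (EigenAway k a b) a * eigenT k a b +
      algebraMap k (EigenAway k a b) b) ∧
    -- (b) continued and (d): the induced `k`-algebra endomorphism `σ` of `A`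
    (∃ σ : EigenAway k a b →ₐ[k] EigenAway k a b,
      σ (algebraMap (EigenRing k a b) (EigenAway k a b) (eigenX k a b)) =
        algebraMap (EigenRing k a b) (EigenAway k a b) (eigenY k a b) ∧
      σ (algebraMap (EigenRing k a b) (EigenAway k a b) (eigenY k a b)) =
        algebraMap (EigenRing k a b) (EigenAway k a b)
          (algebraMap k (EigenRing k a b) b * eigenX k a b +
            algebraMap k (EigenRing k a b) a * eigenY k a b) ∧
      σ (eigenT k a b) = eigenT k a b ∧
      ∀ z ∈ Algebra.adjoin k ({eigenT k a b} : Set (EigenAway k a b)), σ z = z) := by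

  have hb : b ≠ 0 := by
    rintro rfl
    rw [Polynomial.C_0] at hF
    have hfac : (Polynomial.X ^ 2 - Polynomial.C a * Polynomial.X - (0 : Polynomial k))
        = Polynomial.X * (Polynomial.X - Polynomial.C a) := by ring
    rcases hF.isUnit_or_isUnit hfac with h | h
    · exact Polynomial.not_isUnit_X h
    · exact Polynomial.not_isUnit_X_sub_C a h
  have parta := eigenSubst_apply_poly (k := k) a b
  have hrel := eigen_rel (k := k) a b
  have partaI : Ideal.map (eigenSubst k a b) (Ideal.span {eigenPoly k a b}) ≤
      Ideal.span {eigenPoly k a b} := by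
    rw [Ideal.map_span, Set.image_singleton, parta, Ideal.span_singleton_le_iff_mem]
    exact Ideal.mul_mem_left _ _ (Ideal.subset_span rfl)
  have partb : eigenY k a b * (eigenY k a b - algebraMap k (EigenRing k a b) a * eigenX k a b) =
      algebraMap k (EigenRing k a b) b * eigenX k a b ^ 2 := by linear_combination hrel
  have hXu : IsUnit (algebraMap (EigenRing k a b) (EigenAway k a b) (eigenX k a b)) :=
    IsLocalization.Away.algebraMap_isUnit (S := EigenAway k a b) (eigenX k a b)
  have htow : ∀ c : k, algebraMap (EigenRing k a b) (EigenAway k a b)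
      (algebraMap k (EigenRing k a b) c) = algebraMap k (EigenAway k a b) c := fun c =>
    (IsScalarTower.algebraMap_apply k (EigenRing k a b) (EigenAway k a b) c).symm
  have hbu : IsUnit (algebraMap k (EigenAway k a b) b) := (isUnit_iff_ne_zero.mpr hb).map _
  have hYu : IsUnit (algebraMap (EigenRing k a b) (EigenAway k a b) (eigenY k a b)) := by
    apply isUnit_of_mul_isUnit_left
      (y := algebraMap (EigenRing k a b) (EigenAway k a b)
        (eigenY k a b - algebraMap k (EigenRing k a b) a * eigenX k a b))
    rw [← map_mul, partb, map_mul, map_pow, htow]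
    exact hbu.mul (hXu.pow 2)
  have hinv : algebraMap (EigenRing k a b) (EigenAway k a b) (eigenX k a b) *
      IsLocalization.Away.invSelf (eigenX k a b) = 1 :=
    IsLocalization.Away.mul_invSelf (S := EigenAway k a b) (eigenX k a b)
  have hrelA : algebraMap (EigenRing k a b) (EigenAway k a b) (eigenY k a b) ^ 2 -
      algebraMap k (EigenAway k a b) a *
        algebraMap (EigenRing k a b) (EigenAway k a b) (eigenX k a b) *
        algebraMap (EigenRing k a b) (EigenAway k a b) (eigenY k a b) -
      algebraMap k (EigenAway k a b) b *
        algebraMap (EigenRing k a b) (EigenAway k a b) (eigenX k a b) ^ 2 = 0 := by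
    have := congrArg (algebraMap (EigenRing k a b) (EigenAway k a b)) hrel
    simpa only [map_sub, map_mul, map_pow, map_zero, htow] using this
  have partc : (algebraMap (EigenRing k a b) (EigenAway k a b) (eigenY k a b) *
        IsLocalization.Away.invSelf (eigenX k a b)) ^ 2 =
      algebraMap k (EigenAway k a b) a * (algebraMap (EigenRing k a b) (EigenAway k a b) (eigenY k a b) *
        IsLocalization.Away.invSelf (eigenX k a b)) + algebraMap k (EigenAway k a b) b := by
    rw [pow_two]
    exact quad_aux (algebraMap (EigenRing k a b) (EigenAway k a b) (eigenX k a b))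
      (algebraMap (EigenRing k a b) (EigenAway k a b) (eigenY k a b))
      (IsLocalization.Away.invSelf (eigenX k a b))
      (algebraMap k (EigenAway k a b) a) (algebraMap k (EigenAway k a b) b) hinv hrelA
  -- σ
  have hφXu : IsUnit ((eigenPhi k a b).toRingHom (eigenX k a b)) := by
    rw [AlgHom.toRingHom_eq_coe]
    show IsUnit (eigenPhi k a b (eigenX k a b))
    rw [eigenPhi_X]
    exact hYu
  let σ : EigenAway k a b →ₐ[k] EigenAway k a b :=
    { eigenSigma k a b hφXu with
      commutes' := fun c => by
        show eigenSigma k a b hφXu (algebraMap k (EigenAway k a b) c) =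
          algebraMap k (EigenAway k a b) c
        rw [← htow c, eigenSigma_algebraMap, (eigenPhi k a b).commutes]
        exact (htow c).symm }
  have hσf : ∀ r : EigenRing k a b,
      σ (algebraMap (EigenRing k a b) (EigenAway k a b) r) = eigenPhi k a b r :=
    fun r => eigenSigma_algebraMap a b hφXu r
  have hσX : σ (algebraMap (EigenRing k a b) (EigenAway k a b) (eigenX k a b)) =
      algebraMap (EigenRing k a b) (EigenAway k a b) (eigenY k a b) :=
    (hσf _).trans (eigenPhi_X a b)
  have hσY : σ (algebraMap (EigenRing k a b) (EigenAway k a b) (eigenY k a b)) =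
      algebraMap (EigenRing k a b) (EigenAway k a b)
        (algebraMap k (EigenRing k a b) b * eigenX k a b +
          algebraMap k (EigenRing k a b) a * eigenY k a b) :=
    (hσf _).trans (eigenPhi_Y a b)
  have hσinv : algebraMap (EigenRing k a b) (EigenAway k a b) (eigenY k a b) *
      σ (IsLocalization.Away.invSelf (eigenX k a b)) = 1 := by
    have h2 := congrArg σ hinv
    rw [map_mul, map_one, hσX] at h2
    exact h2
  have hgx : algebraMap (EigenRing k a b) (EigenAway k a b)
        (algebraMap k (EigenRing k a b) b * eigenX k a b +
          algebraMap k (EigenRing k a b) a * eigenY k a b) *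
      algebraMap (EigenRing k a b) (EigenAway k a b) (eigenX k a b) =
      algebraMap (EigenRing k a b) (EigenAway k a b) (eigenY k a b) ^ 2 := by
    rw [← map_mul, ← map_pow]
    congr 1
    linear_combination -hrel
  have hσT : σ (algebraMap (EigenRing k a b) (EigenAway k a b) (eigenY k a b) *
        IsLocalization.Away.invSelf (eigenX k a b)) =
      algebraMap (EigenRing k a b) (EigenAway k a b) (eigenY k a b) *
        IsLocalization.Away.invSelf (eigenX k a b) := by
    rw [map_mul, hσY]
    apply (hYu.mul hXu).mul_right_cancel
    exact sigT_aux (algebraMap (EigenRing k a b) (EigenAway k a b) (eigenX k a b))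
      (algebraMap (EigenRing k a b) (EigenAway k a b) (eigenY k a b))
      (algebraMap (EigenRing k a b) (EigenAway k a b)
        (algebraMap k (EigenRing k a b) b * eigenX k a b +
          algebraMap k (EigenRing k a b) a * eigenY k a b))
      (σ (IsLocalization.Away.invSelf (eigenX k a b)))
      (IsLocalization.Away.invSelf (eigenX k a b)) hgx hinv hσinv
  have partc' : eigenT k a b ^ 2 = algebraMap k (EigenAway k a b) a * eigenT k a b +
      algebraMap k (EigenAway k a b) b := partc
  have hσT' : σ (eigenT k a b) = eigenT k a b := hσT
  refine ⟨parta, partaI, partb, hYu, partc', σ, hσX, hσY, hσT', ?_⟩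
  intro z hz
  induction hz using Algebra.adjoin_induction with
  | mem x hx => rw [Set.mem_singleton_iff.mp hx]; exact hσT'
  | algebraMap r => exact σ.commutes r
  | add x y _ _ hx hy => rw [map_add, hx, hy]
  | mul x y _ _ hx hy => rw [map_mul, hx, hy]

end
end
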